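/- For every c > 0 there exists a constant K > 0, depending only on c and the dimension d ≥ 2, with the following property: for all p, q ∈ ℝ^d and r > 0 with |p − q|/r ≤ c, and for all isometric rigid solid cylinders C_p ⊂ B(p,r) and C_q ⊂ B(q,r), there exists a C¹ diffeomorphism φ of ℝ^d whose support is contained in the elongated neighbourhood E(p,q;10r), which maps C_p isometrically onto C_q, and which satisfies [φ]_{Lip} ≤ K. -/

import Mathlib

/-- The rigid solid cylinder `C(a,b;ρ)` in `ℝ^d`:
`{(a+b)/2 + (s/2)•(b-a) + v : s ∈ (-1,1), v ⊥ (b-a), ‖v‖ < ρ}`. -/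
def rigidCyl {d : ℕ} (a b : EuclideanSpace ℝ (Fin d)) (ρ : ℝ) :
    Set (EuclideanSpace ℝ (Fin d)) :=
  {x | ∃ (s : ℝ) (v : EuclideanSpace ℝ (Fin d)), |s| < 1 ∧ (inner ℝ v (b - a) : ℝ) = 0 ∧
    ‖v‖ < ρ ∧ x = midpoint ℝ a b + (s / 2) • (b - a) + v}

/-- The elongated neighbourhood `E(p,q;r)`: points at distance less than `r` from the
segment `[p,q]`. -/
def elongNbhd {d : ℕ} (p q : EuclideanSpace ℝ (Fin d)) (r : ℝ) :
    Set (EuclideanSpace ℝ (Fin d)) :=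
  {x | ∃ t ∈ Set.Icc (0 : ℝ) 1, dist x (t • p + (1 - t) • q) < r}

/-!
By Mazur–Ulam `ι` is affine, so `ι '' C(a,b;ρ) = C(ι a, ι b; ρ)`; this is also the image of
`C(a,b;ρ)` under every rigid motion `x ↦ ι m + R (x - m)`, `m` the midpoint of `[a,b]`, with
`R (b - m) = ι b - ι m`. Take `R = S ^ N` for a plane rotation `S` by an angle at most `π / N`,
and move `m` to `ι m` in `N` steps of length `|ι m - m| / N ≤ (c + 2) r / N`. Each step
`y ↦ γ' + S (y - γ)` is close to the identity, so cutting its displacement off across the annulus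
`2 r ≤ |y - γ| ≤ 5 r` gives `id + F` with `F` a `1/2`-Lipschitz `C¹` map: a `C¹` diffeomorphism
with Lipschitz constant `3/2`, equal to the step near `γ` and to the identity far from `γ`.
The composition of the `N` steps is the required map, with `K = (3/2) ^ N` and `N` depending only
on `c` and `d`.
-/

open Function Metric Set
open scoped Manifold NNReal

section PerturbationOfIdentity

variable {E : Type*} [NormedAddCommGroup E] [NormedSpace ℝ E] [CompleteSpace E]

theorem exists_diffeomorph_coe_eq_id_add {n : WithTop ℕ∞} (hn : n ≠ 0) {F : E → E} {K : ℝ≥0}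
    (hK : K < 1) (hF : ContDiff ℝ n F) (hFK : LipschitzWith K F) :
    ∃ Φ : E ≃ₘ^n⟮𝓘(ℝ, E), 𝓘(ℝ, E)⟯ E, ⇑Φ = id + F := by
  have happrox : ApproximatesLinearOn (id + F) (ContinuousLinearEquiv.refl ℝ E : E →L[ℝ] E)
      univ K := by
    intro x _ y _
    have h : x + F x - (y + F y) - (x - y) = F x - F y := by abel
    simpa [h, dist_eq_norm] using hFK.dist_le_mul x y
  have hderiv : ∀ x, HasFDerivAt (id + F) (ContinuousLinearMap.id ℝ E + fderiv ℝ F x) x :=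
    fun x ↦ (hasFDerivAt_id x).add ((hF.differentiable hn) x).hasFDerivAt
  have hsmall : ∀ x, ‖-fderiv ℝ F x‖ < 1 := fun x ↦ by
    rw [norm_neg]
    exact (((hF.differentiable hn) x).hasFDerivAt.le_of_lipschitz hFK).trans_lt hK
  let f' : E → E ≃L[ℝ] E := fun x ↦ .ofUnit (Units.oneSub _ (hsmall x))
  have hf' : ∀ x, HasFDerivAt (id + F) (f' x : E →L[ℝ] E) x := fun x ↦ by
    convert hderiv x using 1
    change ((Units.oneSub _ (hsmall x) : (E →L[ℝ] E)ˣ) : E →L[ℝ] E) = _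
    rw [Units.val_oneSub, sub_neg_eq_add]
    rfl
  have hc : Subsingleton E ∨ K < ‖((ContinuousLinearEquiv.refl ℝ E).symm : E →L[ℝ] E)‖₊⁻¹ := by
    rcases subsingleton_or_nontrivial E with h | h
    · exact .inl h
    · right
      simpa using hK
  let h := happrox.toHomeomorph (id + F) hc
  have hcont : ContDiff ℝ n (id + F) := contDiff_id.add hF
  exact ⟨{ toEquiv := h.toEquiv
           contMDiff_toFun := contMDiff_iff_contDiff.2 hcont
           contMDiff_invFun := contMDiff_iff_contDiff.2 (h.contDiff_symm hf' hcont) }, rfl⟩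

end PerturbationOfIdentity

theorem LipschitzWith.smul_of_abs_le_one {α E : Type*} [PseudoMetricSpace α]
    [SeminormedAddCommGroup E] [NormedSpace ℝ E] {χ : α → ℝ} {w : α → E} {Kχ Kw M : ℝ≥0}
    (hχ : LipschitzWith Kχ χ) (hχ_le : ∀ x, |χ x| ≤ 1) (hw : LipschitzWith Kw w)
    (hwM : ∀ x, χ x ≠ 0 → ‖w x‖ ≤ M) :
    LipschitzWith (Kχ * M + Kw) (fun x ↦ χ x • w x) := by
  refine .of_dist_le_mul fun x y ↦ ?_
  wlog hx : χ x ≠ 0 generalizing x y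
  · by_cases hy : χ y = 0
    · simp only [not_not.1 hx, hy, zero_smul, dist_self]
      positivity
    · simpa only [dist_comm] using this y x hy
  have hsplit : χ x • w x - χ y • w y = (χ x - χ y) • w x + χ y • (w x - w y) := by
    simp only [sub_smul, smul_sub]; abel
  rw [dist_eq_norm, hsplit]
  calc ‖(χ x - χ y) • w x + χ y • (w x - w y)‖
      ≤ |χ x - χ y| * ‖w x‖ + |χ y| * ‖w x - w y‖ := by
        simpa only [norm_smul, Real.norm_eq_abs] using
          norm_add_le ((χ x - χ y) • w x) (χ y • (w x - w y))
    _ ≤ (Kχ * dist x y) * M + 1 * (Kw * dist x y) := by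
        gcongr
        · simpa only [Real.dist_eq] using hχ.dist_le_mul x y
        · exact hwM x hx
        · exact hχ_le y
        · simpa only [dist_eq_norm] using hw.dist_le_mul x y
    _ = ↑(Kχ * M + Kw) * dist x y := by push_cast; ring

section LocalRigidMotion

variable {E : Type*} [NormedAddCommGroup E] [NormedSpace ℝ E] [FiniteDimensional ℝ E]

theorem exists_cutoff_lipschitzWith :
    ∃ L : ℝ≥0, ∀ (γ : E) (r : ℝ≥0), 0 < r → ∃ χ : E → ℝ, ContDiff ℝ 1 χ ∧
      LipschitzWith (L / r) χ ∧ (∀ y, |χ y| ≤ 1) ∧ (∀ y ∈ closedBall γ (2 * r), χ y = 1) ∧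
      support χ ⊆ ball γ (5 * r) := by
  let f : ContDiffBump (0 : E) := ⟨2, 5, by norm_num, by norm_num⟩
  obtain ⟨L, hL⟩ := ContDiff.lipschitzWith_of_hasCompactSupport f.hasCompactSupport
    (f.contDiff (n := 1)) one_ne_zero
  refine ⟨L, fun γ r hr ↦ ⟨fun y ↦ f ((r : ℝ)⁻¹ • (y - γ)), ?_, ?_, fun y ↦ ?_, fun y hy ↦ ?_,
    fun y hy ↦ ?_⟩⟩
  all_goals have hr' : (0 : ℝ) < r := hr
  · have := f.contDiff (n := 1)
    fun_prop
  · rw [div_eq_mul_inv]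
    refine hL.comp (LipschitzWith.of_dist_le_mul fun x y ↦ ?_)
    rw [dist_eq_norm, dist_eq_norm, ← smul_sub, sub_sub_sub_cancel_right, norm_smul]
    simp
  · rw [abs_of_nonneg (f.nonneg' _)]
    exact f.le_one
  · refine f.one_of_mem_closedBall ?_
    rw [mem_closedBall_zero_iff, norm_smul, norm_inv, Real.norm_of_nonneg r.coe_nonneg,
      inv_mul_le_iff₀ hr', ← dist_eq_norm, mul_comm]
    exact hy
  · have : (r : ℝ)⁻¹ • (y - γ) ∈ ball 0 5 := f.support_eq ▸ hy
    rw [mem_ball_zero_iff, norm_smul, norm_inv, Real.norm_of_nonneg r.coe_nonneg,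
      inv_mul_lt_iff₀ hr', ← dist_eq_norm, mul_comm] at this
    exact this

theorem exists_diffeomorph_eqOn_closedBall_of_near_id :
    ∃ δ : ℝ≥0, 0 < δ ∧ ∀ (γ γ' : E) (r : ℝ) (Q : E →L[ℝ] E), 0 < r → ‖γ' - γ‖ ≤ δ * r →
      (∀ z, ‖Q z - z‖ ≤ δ * ‖z‖) →
      ∃ Φ : E ≃ₘ^1⟮𝓘(ℝ, E), 𝓘(ℝ, E)⟯ E, LipschitzWith (3 / 2) Φ ∧
        EqOn Φ (fun y ↦ γ' + Q (y - γ)) (closedBall γ (2 * r)) ∧ ∀ y ∉ ball γ (5 * r), Φ y = y := by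
  obtain ⟨L, hcutoff⟩ := exists_cutoff_lipschitzWith (E := E)
  refine ⟨(2 * (6 * L + 1))⁻¹, by positivity, fun γ γ' r Q hr hγ hQ ↦ ?_⟩
  set δ : ℝ≥0 := (2 * (6 * L + 1))⁻¹ with hδ
  lift r to ℝ≥0 using hr.le
  obtain ⟨χ, hχc, hχ, hχ1, hχ_one, hχ_supp⟩ := hcutoff γ r hr
  let w : E → E := fun y ↦ γ' - γ + (Q (y - γ) - (y - γ))
  have hw : LipschitzWith δ w := .of_dist_le_mul fun x y ↦ by
    have : w x - w y = Q (x - y) - (x - y) := by simp only [w, map_sub]; abel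
    rw [dist_eq_norm, dist_eq_norm, this]
    exact hQ _
  have hwM : ∀ y, χ y ≠ 0 → ‖w y‖ ≤ (6 * δ * r : ℝ≥0) := fun y hy ↦ by
    calc ‖w y‖ ≤ ‖γ' - γ‖ + ‖Q (y - γ) - (y - γ)‖ := norm_add_le _ _
      _ ≤ δ * r + δ * (5 * r) := by
        have := (mem_ball.1 (hχ_supp hy)).le
        rw [dist_eq_norm] at this
        gcongr
        exact (hQ _).trans (by gcongr)
      _ = (6 * δ * r : ℝ≥0) := by push_cast; ring
  have hF : LipschitzWith (1 / 2) (fun y ↦ χ y • w y) := by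
    refine (hχ.smul_of_abs_le_one hχ1 hw hwM).weaken (le_of_eq ?_)
    have hr0 : r ≠ 0 := by exact_mod_cast hr.ne'
    rw [hδ]
    field_simp
  obtain ⟨Φ, hΦ⟩ := exists_diffeomorph_coe_eq_id_add one_ne_zero (by norm_num)
    (hχc.smul (by fun_prop)) hF
  refine ⟨Φ, ?_, fun y hy ↦ ?_, fun y hy ↦ ?_⟩
  · rw [hΦ]
    exact (LipschitzWith.id.add hF).weaken (by norm_num)
  · rw [hΦ]
    change y + χ y • w y = _
    rw [hχ_one y hy, one_smul]
    simp only [w]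
    abel
  · simp [hΦ, notMem_support.1 fun h ↦ hy (hχ_supp h)]

end LocalRigidMotion

namespace Diffeomorph

variable {E : Type*} [NormedAddCommGroup E] [NormedSpace ℝ E] {n : WithTop ℕ∞}
  (Φ : ℕ → E ≃ₘ^n⟮𝓘(ℝ, E), 𝓘(ℝ, E)⟯ E)

noncomputable def composeUpTo : ℕ → E ≃ₘ^n⟮𝓘(ℝ, E), 𝓘(ℝ, E)⟯ E
  | 0 => Diffeomorph.refl _ _ _
  | k + 1 => (composeUpTo k).trans (Φ k)

@[simp]
theorem coe_composeUpTo_zero : ⇑(composeUpTo Φ 0) = id := coe_refl _ _ _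

@[simp]
theorem coe_composeUpTo_succ (k : ℕ) : ⇑(composeUpTo Φ (k + 1)) = Φ k ∘ composeUpTo Φ k :=
  coe_trans _ _

theorem lipschitzWith_composeUpTo {K : ℝ≥0} (hK : ∀ k, LipschitzWith K (Φ k)) (N : ℕ) :
    LipschitzWith (K ^ N) (composeUpTo Φ N) := by
  induction N with
  | zero => simpa using LipschitzWith.id
  | succ k ih => simpa [pow_succ'] using (hK k).comp ih

theorem composeUpTo_apply_eq {N : ℕ} {g : ℕ → E → E} {x : E} (h0 : g 0 x = x)
    (hstep : ∀ k < N, Φ k (g k x) = g (k + 1) x) : composeUpTo Φ N x = g N x := by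
  induction N with
  | zero => exact h0.symm
  | succ k ih =>
    rw [coe_composeUpTo_succ, comp_apply, ih fun j hj ↦ hstep j (hj.trans k.lt_succ_self)]
    exact hstep k k.lt_succ_self

theorem composeUpTo_apply_eq_self {N : ℕ} {x : E} (h : ∀ k < N, Φ k x = x) :
    composeUpTo Φ N x = x :=
  composeUpTo_apply_eq Φ (g := fun _ ↦ id) rfl h

end Diffeomorph

section RigidMotionAlongSegment

variable {E : Type*} [NormedAddCommGroup E] [NormedSpace ℝ E] [FiniteDimensional ℝ E]

theorem exists_diffeomorph_eqOn_closedBall_pow :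
    ∃ δ : ℝ≥0, 0 < δ ∧ ∀ (N : ℕ) (m m' : E) (r : ℝ) (R : E ≃ₗᵢ[ℝ] E), N ≠ 0 → 0 < r →
      ‖m' - m‖ ≤ N * δ * r → (∀ z, ‖R z - z‖ ≤ δ * ‖z‖) →
      ∃ Φ : E ≃ₘ^1⟮𝓘(ℝ, E), 𝓘(ℝ, E)⟯ E, LipschitzWith ((3 / 2) ^ N) Φ ∧
        EqOn Φ (fun x ↦ m' + (R ^ N) (x - m)) (closedBall m (2 * r)) ∧
        {x | Φ x ≠ x} ⊆ ⋃ k < N, ball (AffineMap.lineMap m m' ((k : ℝ) / N)) (5 * r) := by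
  obtain ⟨δ, hδ, hstep⟩ := exists_diffeomorph_eqOn_closedBall_of_near_id (E := E)
  refine ⟨δ, hδ, fun N m m' r R hN hr hmm' hR ↦ ?_⟩
  have hN' : (0 : ℝ) < N := by positivity
  let γ : ℕ → E := fun k ↦ AffineMap.lineMap m m' ((k : ℝ) / N)
  have hγ : ∀ k, ‖γ (k + 1) - γ k‖ ≤ δ * r := fun k ↦ by
    have : γ (k + 1) - γ k = (N : ℝ)⁻¹ • (m' - m) := by
      simp only [γ, AffineMap.lineMap_apply_module', Nat.cast_succ]
      module
    rw [this, norm_smul, norm_inv, RCLike.norm_natCast, inv_mul_le_iff₀ hN']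
    linarith
  choose Φ hΦlip hΦeq hΦfix using fun k ↦
    hstep (γ k) (γ (k + 1)) r (R : E →L[ℝ] E) hr (hγ k) hR
  refine ⟨Diffeomorph.composeUpTo Φ N, Diffeomorph.lipschitzWith_composeUpTo Φ hΦlip N,
    fun x hx ↦ ?_, fun x hx ↦ ?_⟩
  · -- the `k`-th partial composition is the rigid motion `x ↦ γ k + R ^ k (x - m)` near `m`
    have hγN : γ N = m' := by simp [γ, hN'.ne']
    rw [Diffeomorph.composeUpTo_apply_eq Φ (g := fun k x ↦ γ k + (R ^ k) (x - m)) (by simp [γ])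
      fun k _ ↦ ?_, hγN]
    rw [hΦeq k]
    · simp [pow_succ']
    · rwa [mem_closedBall, dist_eq_norm, add_sub_cancel_left, LinearIsometryEquiv.norm_map,
        ← dist_eq_norm]
  · by_contra hout
    simp only [mem_iUnion, not_exists] at hout
    exact hx (Diffeomorph.composeUpTo_apply_eq_self Φ fun k hk ↦ hΦfix k x (hout k hk))

end RigidMotionAlongSegment

section PlaneRotation

open Real
open scoped RealInnerProductSpace

variable {E : Type*} [NormedAddCommGroup E] [InnerProductSpace ℝ E] {u e : E}

/-- The rotation by `θ` in the plane spanned by `u` and `e` when these are orthonormal. -/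
noncomputable def planeRotationCLM (u e : E) (θ : ℝ) : E →L[ℝ] E :=
  ContinuousLinearMap.id ℝ E
    + (cos θ - 1) • ((innerSL ℝ u).smulRight u + (innerSL ℝ e).smulRight e)
    + sin θ • ((innerSL ℝ u).smulRight e - (innerSL ℝ e).smulRight u)

theorem planeRotationCLM_apply (θ : ℝ) (x : E) :
    planeRotationCLM u e θ x =
      x + (cos θ - 1) • (⟪u, x⟫ • u + ⟪e, x⟫ • e) + sin θ • (⟪u, x⟫ • e - ⟪e, x⟫ • u) := by
  simp [planeRotationCLM]

theorem planeRotationCLM_zero : planeRotationCLM u e 0 = ContinuousLinearMap.id ℝ E := by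
  ext x
  simp [planeRotationCLM_apply]

theorem norm_planeRotationCLM_apply_sub_self_le (hu : ‖u‖ = 1) (he : ‖e‖ = 1) (θ : ℝ) (x : E) :
    ‖planeRotationCLM u e θ x - x‖ ≤ 4 * |θ| * ‖x‖ := by
  have hinner : ∀ v : E, ‖v‖ = 1 → ‖⟪v, x⟫‖ ≤ ‖x‖ := fun v hv ↦ by
    simpa [hv] using norm_inner_le_norm (𝕜 := ℝ) v x
  have hP : ‖⟪u, x⟫ • u + ⟪e, x⟫ • e‖ ≤ 2 * ‖x‖ := by
    refine (norm_add_le _ _).trans ?_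
    rw [norm_smul, norm_smul, hu, he]
    linarith [hinner u hu, hinner e he]
  have hJ : ‖⟪u, x⟫ • e - ⟪e, x⟫ • u‖ ≤ 2 * ‖x‖ := by
    refine (norm_sub_le _ _).trans ?_
    rw [norm_smul, norm_smul, hu, he]
    linarith [hinner u hu, hinner e he]
  have hcos : ‖cos θ - 1‖ ≤ |θ| := by
    simpa [cos_zero] using abs_cos_sub_cos_le θ 0
  have hsin : ‖sin θ‖ ≤ |θ| := by
    simpa [sin_zero] using abs_sin_sub_sin_le θ 0
  rw [planeRotationCLM_apply, add_assoc, add_sub_cancel_left]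
  calc _ ≤ ‖cos θ - 1‖ * ‖⟪u, x⟫ • u + ⟪e, x⟫ • e‖ + ‖sin θ‖ * ‖⟪u, x⟫ • e - ⟪e, x⟫ • u‖ := by
        rw [← norm_smul, ← norm_smul]; exact norm_add_le _ _
    _ ≤ |θ| * (2 * ‖x‖) + |θ| * (2 * ‖x‖) := by gcongr
    _ = 4 * |θ| * ‖x‖ := by ring

section Orthonormal

variable (hu : ‖u‖ = 1) (he : ‖e‖ = 1) (hue : ⟪u, e⟫ = 0)
include hu he hue

theorem inner_planeRotationCLM_apply (θ : ℝ) (x : E) :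
    ⟪u, planeRotationCLM u e θ x⟫ = cos θ * ⟪u, x⟫ - sin θ * ⟪e, x⟫ ∧
      ⟪e, planeRotationCLM u e θ x⟫ = sin θ * ⟪u, x⟫ + cos θ * ⟪e, x⟫ := by
  have huu : ⟪u, u⟫ = 1 := by simp [hu]
  have hee : ⟪e, e⟫ = 1 := by simp [he]
  have heu : ⟪e, u⟫ = 0 := by rw [real_inner_comm, hue]
  constructor <;>
  · simp only [planeRotationCLM_apply, inner_add_right, inner_sub_right, real_inner_smul_right,
      huu, hee, hue, heu]
    ring

theorem planeRotationCLM_apply_apply (a b : ℝ) (x : E) :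
    planeRotationCLM u e a (planeRotationCLM u e b x) = planeRotationCLM u e (a + b) x := by
  obtain ⟨h₁, h₂⟩ := inner_planeRotationCLM_apply hu he hue b x
  rw [planeRotationCLM_apply _ (planeRotationCLM u e b x), h₁, h₂, planeRotationCLM_apply,
    planeRotationCLM_apply, cos_add, sin_add]
  module

theorem norm_planeRotationCLM_apply (θ : ℝ) (x : E) : ‖planeRotationCLM u e θ x‖ = ‖x‖ := by
  have huu : ⟪u, u⟫ = 1 := by simp [hu]
  have hee : ⟪e, e⟫ = 1 := by simp [he]
  have heu : ⟪e, u⟫ = 0 := by rw [real_inner_comm, hue]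
  suffices ⟪planeRotationCLM u e θ x, planeRotationCLM u e θ x⟫ = ⟪x, x⟫ by
    simpa [real_inner_self_eq_norm_sq] using this
  simp only [planeRotationCLM_apply, inner_add_left, inner_add_right, inner_sub_left,
    inner_sub_right, real_inner_smul_left, real_inner_smul_right, huu, hee, hue, heu,
    real_inner_comm x u, real_inner_comm x e]
  linear_combination (⟪x, u⟫ ^ 2 + ⟪x, e⟫ ^ 2) * sin_sq_add_cos_sq θ

noncomputable def planeRotation (θ : ℝ) : E ≃ₗᵢ[ℝ] E :=
  { (planeRotationCLM u e θ : E →ₗ[ℝ] E) with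
    invFun := planeRotationCLM u e (-θ)
    left_inv := fun x ↦ by
      simp [planeRotationCLM_apply_apply hu he hue, planeRotationCLM_zero]
    right_inv := fun x ↦ by
      simp [planeRotationCLM_apply_apply hu he hue, planeRotationCLM_zero]
    norm_map' := norm_planeRotationCLM_apply hu he hue θ }

theorem planeRotation_apply (θ : ℝ) (x : E) :
    planeRotation hu he hue θ x = planeRotationCLM u e θ x := rfl

theorem planeRotation_pow (θ : ℝ) (n : ℕ) :
    planeRotation hu he hue θ ^ n = planeRotation hu he hue (n * θ) := by
  induction n with
  | zero => ext x; simp [planeRotation_apply, planeRotationCLM_zero]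
  | succ n ih =>
    ext x
    rw [pow_succ', LinearIsometryEquiv.coe_mul, comp_apply, ih, planeRotation_apply,
      planeRotation_apply, planeRotation_apply, planeRotationCLM_apply_apply hu he hue]
    push_cast
    ring_nf

theorem planeRotation_apply_left (θ : ℝ) :
    planeRotation hu he hue θ u = cos θ • u + sin θ • e := by
  have huu : ⟪u, u⟫ = 1 := by simp [hu]
  have heu : ⟪e, u⟫ = 0 := by rw [real_inner_comm, hue]
  simp only [planeRotation_apply, planeRotationCLM_apply, huu, heu]
  module

end Orthonormal

theorem exists_norm_eq_one_norm_smul_eq {F : Type*} [NormedAddCommGroup F] [NormedSpace ℝ F]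
    [Nontrivial F] (x : F) : ∃ u : F, ‖u‖ = 1 ∧ ‖x‖ • u = x := by
  by_cases hx : x = 0
  · obtain ⟨u, hu⟩ := exists_norm_eq F zero_le_one
    exact ⟨u, hu, by simp [hx]⟩
  · exact ⟨‖x‖⁻¹ • x, by simp [norm_smul, hx], by simp [smul_smul, hx]⟩

theorem nontrivial_orthogonal_span_singleton (hE : 2 ≤ Module.finrank ℝ E) (u : E) :
    Nontrivial (ℝ ∙ u)ᗮ := by
  have : FiniteDimensional ℝ E := Module.finite_of_finrank_pos (by omega)
  have hK : Module.finrank ℝ (ℝ ∙ u) ≤ 1 := by simpa using finrank_span_le_card ({u} : Set E)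
  have := Submodule.finrank_add_finrank_orthogonal (ℝ ∙ u)
  apply Module.nontrivial_of_finrank_pos (R := ℝ)
  omega

theorem exists_cos_smul_add_sin_smul_eq (hE : 2 ≤ Module.finrank ℝ E) {u w : E} (hu : ‖u‖ = 1)
    (hw : ‖w‖ = 1) : ∃ e : E, ‖e‖ = 1 ∧ ⟪u, e⟫ = 0 ∧
      cos (arccos ⟪u, w⟫) • u + sin (arccos ⟪u, w⟫) • e = w := by
  set c := ⟪u, w⟫
  have hc : |c| ≤ 1 := by simpa [hu, hw] using abs_real_inner_le_norm u w
  have hcos : cos (arccos c) = c := cos_arccos (abs_le.1 hc).1 (abs_le.1 hc).2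
  set v := w - c • u
  have huv : ⟪u, v⟫ = 0 := by
    rw [inner_sub_right, real_inner_smul_right, real_inner_self_eq_norm_sq, hu]
    ring
  have hv : ‖v‖ = sin (arccos c) := by
    rw [sin_arccos, ← sqrt_sq (norm_nonneg v), norm_sub_sq_real, real_inner_smul_right,
      real_inner_comm, norm_smul, hu, hw, Real.norm_eq_abs, mul_one, sq_abs]
    congr 1
    ring
  -- `e` is a unit vector along `v`, or any unit vector orthogonal to `u` when `v = 0`
  have := nontrivial_orthogonal_span_singleton hE u
  obtain ⟨⟨e, heK⟩, he, hev⟩ := exists_norm_eq_one_norm_smul_eq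
    (⟨v, Submodule.mem_orthogonal_singleton_iff_inner_right.2 huv⟩ : (ℝ ∙ u)ᗮ)
  refine ⟨e, he, Submodule.inner_right_of_mem_orthogonal (Submodule.mem_span_singleton_self u) heK,
    ?_⟩
  rw [hcos, ← hv, show ‖v‖ • e = v from congrArg Subtype.val hev]
  simp [v]

theorem exists_planeRotation_apply_eq (hE : 2 ≤ Module.finrank ℝ E) {x y : E} (hxy : ‖x‖ = ‖y‖) :
    ∃ (u e : E) (hu : ‖u‖ = 1) (he : ‖e‖ = 1) (hue : ⟪u, e⟫ = 0) (θ : ℝ),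
      |θ| ≤ π ∧ planeRotation hu he hue θ x = y := by
  have : Nontrivial E := Module.nontrivial_of_finrank_pos (R := ℝ) (by omega)
  obtain ⟨u, hu, hxu⟩ := exists_norm_eq_one_norm_smul_eq x
  obtain ⟨w, hw, hyw⟩ := exists_norm_eq_one_norm_smul_eq y
  obtain ⟨e, he, hue, hθ⟩ := exists_cos_smul_add_sin_smul_eq hE hu hw
  refine ⟨u, e, hu, he, hue, arccos ⟪u, w⟫, ?_, ?_⟩
  · rw [abs_of_nonneg (arccos_nonneg _)]
    exact arccos_le_pi _
  · rw [← hxu, ← hyw, map_smul, planeRotation_apply_left, hθ, hxy]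

theorem exists_linearIsometryEquiv_pow_apply_eq (hE : 2 ≤ Module.finrank ℝ E) {x y : E}
    (hxy : ‖x‖ = ‖y‖) {N : ℕ} (hN : N ≠ 0) :
    ∃ R : E ≃ₗᵢ[ℝ] E, (R ^ N) x = y ∧ ∀ z, ‖R z - z‖ ≤ 4 * π / N * ‖z‖ := by
  obtain ⟨u, e, hu, he, hue, θ, hθ, hθxy⟩ := exists_planeRotation_apply_eq hE hxy
  have hN' : (0 : ℝ) < N := by positivity
  refine ⟨planeRotation hu he hue (θ / N), ?_, fun z ↦ ?_⟩
  · rwa [planeRotation_pow, mul_div_cancel₀ _ hN'.ne']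
  · refine (norm_planeRotationCLM_apply_sub_self_le hu he _ z).trans ?_
    rw [abs_div, Nat.abs_cast, mul_div_assoc]
    gcongr

end PlaneRotation

section RigidMotion

open Real

variable {E : Type*} [NormedAddCommGroup E] [InnerProductSpace ℝ E]

theorem exists_diffeomorph_eqOn_closedBall (hE : 2 ≤ Module.finrank ℝ E) (c : ℝ) :
    ∃ K : ℝ≥0, 0 < K ∧ ∀ (m m' v v' : E) (r : ℝ), 0 < r → ‖m' - m‖ ≤ c * r → ‖v‖ = ‖v'‖ →
      ∃ (Φ : E ≃ₘ^1⟮𝓘(ℝ, E), 𝓘(ℝ, E)⟯ E) (R : E ≃ₗᵢ[ℝ] E), R v = v' ∧ LipschitzWith K Φ ∧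
        EqOn Φ (fun x ↦ m' + R (x - m)) (closedBall m (2 * r)) ∧
        closure {x | Φ x ≠ x} ⊆
          ⋃ t ∈ Icc (0 : ℝ) 1, closedBall (AffineMap.lineMap m m' t) (5 * r) := by
  have : FiniteDimensional ℝ E := Module.finite_of_finrank_pos (by omega)
  obtain ⟨δ, hδ, hmotion⟩ := exists_diffeomorph_eqOn_closedBall_pow (E := E)
  have hδ' : (0 : ℝ) < δ := hδ
  obtain ⟨N, hN⟩ := exists_nat_ge (max (c / δ) (4 * π / δ))
  have hNpos : (0 : ℝ) < N := (by positivity : 0 < 4 * π / δ).trans_le ((le_max_right _ _).trans hN)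
  have hN0 : N ≠ 0 := by exact_mod_cast hNpos.ne'
  have hcN : c ≤ N * δ := (div_le_iff₀ hδ').1 ((le_max_left _ _).trans hN)
  have hπN : 4 * π / N ≤ δ := by
    rw [div_le_iff₀ hNpos]
    linarith [(div_le_iff₀ hδ').1 ((le_max_right _ _).trans hN)]
  refine ⟨(3 / 2) ^ N, by positivity, fun m m' v v' r hr hmm' hvv' ↦ ?_⟩
  obtain ⟨R, hRN, hR⟩ := exists_linearIsometryEquiv_pow_apply_eq hE hvv' hN0
  obtain ⟨Φ, hΦlip, hΦeq, hΦsupp⟩ := hmotion N m m' r R hN0 hr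
    (hmm'.trans (mul_le_mul_of_nonneg_right hcN hr.le)) fun z ↦ (hR z).trans (by gcongr)
  refine ⟨Φ, R ^ N, hRN, hΦlip, hΦeq, closure_minimal ?_ ?_⟩
  · refine hΦsupp.trans (iUnion₂_subset fun k hk ↦ ?_)
    refine ball_subset_closedBall.trans (subset_biUnion_of_mem (u := fun t ↦ closedBall _ _) ?_)
    exact ⟨by positivity, div_le_one_of_le₀ (by exact_mod_cast hk.le) hNpos.le⟩
  · have hseg : IsCompact (AffineMap.lineMap m m' '' Icc (0 : ℝ) 1) :=
      isCompact_Icc.image AffineMap.lineMap_continuous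
    rw [← biUnion_image (g := fun x ↦ closedBall x (5 * r)),
      ← hseg.cthickening_eq_biUnion_closedBall (by positivity)]
    exact isClosed_cthickening

end RigidMotion

section Cylinders

variable {d : ℕ} {a b : EuclideanSpace ℝ (Fin d)} {ρ : ℝ}

theorem midpoint_mem_rigidCyl (hρ : 0 < ρ) : midpoint ℝ a b ∈ rigidCyl a b ρ :=
  ⟨0, 0, by simp, by simp, by simpa using hρ, by simp⟩

theorem IsometryEquiv.image_rigidCyl_subset
    (f : EuclideanSpace ℝ (Fin d) ≃ᵢ EuclideanSpace ℝ (Fin d)) :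
    f '' rigidCyl a b ρ ⊆ rigidCyl (f a) (f b) ρ := by
  rintro _ ⟨_, ⟨s, v, hs, hv, hvρ, rfl⟩, rfl⟩
  let A := f.toRealAffineIsometryEquiv
  have hA : ∀ x, f x = A x := fun _ ↦ rfl
  have hba : f b - f a = A.linearIsometryEquiv (b - a) := (A.map_vsub b a).symm
  refine ⟨s, A.linearIsometryEquiv v, hs, ?_, by simpa using hvρ, ?_⟩
  · rw [hba, LinearIsometryEquiv.inner_map_map, hv]
  · rw [hba, ← f.map_midpoint, add_assoc, add_comm, hA, hA, ← vadd_eq_add, A.map_vadd,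
      vadd_eq_add, map_add, map_smul]
    abel

theorem IsometryEquiv.image_rigidCyl (f : EuclideanSpace ℝ (Fin d) ≃ᵢ EuclideanSpace ℝ (Fin d)) :
    f '' rigidCyl a b ρ = rigidCyl (f a) (f b) ρ := by
  refine f.image_rigidCyl_subset.antisymm fun x hx ↦ ⟨f.symm x, ?_, f.apply_symm_apply x⟩
  simpa using f.symm.image_rigidCyl_subset (mem_image_of_mem _ hx)

theorem IsometryEquiv.apply_eq_of_apply_midpoint_eq {E F : Type*} [NormedAddCommGroup E]
    [NormedSpace ℝ E] [NormedAddCommGroup F] [NormedSpace ℝ F] {f g : E ≃ᵢ F} {x y : E}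
    (hm : f (midpoint ℝ x y) = g (midpoint ℝ x y)) (hy : f y = g y) : f x = g x := by
  rw [f.map_midpoint, g.map_midpoint, hy, midpoint_eq_midpoint_iff_vsub_eq_vsub] at hm
  simpa [sub_eq_zero] using hm

theorem closedBall_lineMap_subset_elongNbhd {p q m m' : EuclideanSpace ℝ (Fin d)} {r R R' t : ℝ}
    (hm : dist m p ≤ r) (hm' : dist m' q ≤ r) (ht : t ∈ Icc (0 : ℝ) 1) (hR : R + r < R') :
    closedBall (AffineMap.lineMap m m' t) R ⊆ elongNbhd p q R' := by
  refine fun x hx ↦ ⟨1 - t, ⟨by linarith [ht.2], by linarith [ht.1]⟩, ?_⟩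
  have hcenter : dist (AffineMap.lineMap m m' t) ((1 - t) • p + (1 - (1 - t)) • q) ≤ r := by
    have : AffineMap.lineMap m m' t - ((1 - t) • p + (1 - (1 - t)) • q) =
        (1 - t) • (m - p) + t • (m' - q) := by
      rw [AffineMap.lineMap_apply_module]
      module
    rw [dist_eq_norm, this]
    refine (norm_add_le _ _).trans ?_
    rw [norm_smul, norm_smul, Real.norm_of_nonneg (by linarith [ht.2]),
      Real.norm_of_nonneg ht.1, ← dist_eq_norm, ← dist_eq_norm]
    nlinarith [ht.1, ht.2]
  linarith [dist_triangle x (AffineMap.lineMap m m' t) ((1 - t) • p + (1 - (1 - t)) • q),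
    mem_closedBall.1 hx]

end Cylinders

theorem cylinder_isometry_two_balls_general (d : ℕ) (hd : 2 ≤ d) (c : ℝ) :
    ∃ K : ℝ, 0 < K ∧
      ∀ (p q : EuclideanSpace ℝ (Fin d)) (r : ℝ), 0 < r → dist p q ≤ c * r →
      ∀ (a b a' b' : EuclideanSpace ℝ (Fin d)) (ρ ρ' : ℝ),
        a ≠ b → 0 < ρ → a' ≠ b' → 0 < ρ' →
        rigidCyl a b ρ ⊆ Metric.ball p r → rigidCyl a' b' ρ' ⊆ Metric.ball q r →
        (∃ ι : EuclideanSpace ℝ (Fin d) ≃ᵢ EuclideanSpace ℝ (Fin d),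
          ι '' rigidCyl a b ρ = rigidCyl a' b' ρ') →
        ∃ φ ψ : EuclideanSpace ℝ (Fin d) → EuclideanSpace ℝ (Fin d),
          ContDiff ℝ 1 φ ∧ ContDiff ℝ 1 ψ ∧
          Function.LeftInverse ψ φ ∧ Function.RightInverse ψ φ ∧
          closure {x | φ x ≠ x} ⊆ elongNbhd p q (10 * r) ∧
          φ '' rigidCyl a b ρ = rigidCyl a' b' ρ' ∧
          (∀ x ∈ rigidCyl a b ρ, ∀ y ∈ rigidCyl a b ρ, dist (φ x) (φ y) = dist x y) ∧
          ∀ x y, dist (φ x) (φ y) ≤ K * dist x y := by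
  obtain ⟨K, hK, hmotion⟩ :=
    exists_diffeomorph_eqOn_closedBall (E := EuclideanSpace ℝ (Fin d)) (by simpa using hd) (c + 2)
  refine ⟨K, hK, fun p q r hr hpq a b a' b' ρ ρ' _ hρ _ _ hCp hCq ⟨ι, hι⟩ ↦ ?_⟩
  set m := midpoint ℝ a b
  have hm : dist m p < r := hCp (midpoint_mem_rigidCyl hρ)
  have hm' : dist (ι m) q < r := hCq (hι ▸ mem_image_of_mem ι (midpoint_mem_rigidCyl hρ))
  obtain ⟨Φ, R, hR, hΦlip, hΦeq, hΦsupp⟩ := hmotion m (ι m) (b - m) (ι b - ι m) r hr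
    (by rw [← dist_eq_norm]; linarith [dist_triangle4 (ι m) q p m, dist_comm q p, dist_comm p m])
    (by rw [← dist_eq_norm, ← dist_eq_norm, ι.dist_eq])
  let g := (IsometryEquiv.subRight m).trans (R.toIsometryEquiv.trans (IsometryEquiv.addLeft (ι m)))
  have hgm : g m = ι m := by simp [g]
  have hgb : g b = ι b := by simp [g, hR]
  have hC : rigidCyl a b ρ ⊆ closedBall m (2 * r) := fun x hx ↦ by
    rw [mem_closedBall]
    linarith [dist_triangle x p m, dist_comm m p, mem_ball.1 (hCp hx)]
  refine ⟨Φ, Φ.symm, Φ.contDiff, Φ.symm.contDiff, Φ.symm_apply_apply, Φ.apply_symm_apply,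
    hΦsupp.trans (iUnion₂_subset fun t ht ↦
      closedBall_lineMap_subset_elongNbhd hm.le hm'.le ht (by linarith)),
    ?_, fun x hx y hy ↦ ?_, hΦlip.dist_le_mul⟩
  · rw [(hΦeq.mono hC).image_eq]
    change g '' _ = _
    rw [g.image_rigidCyl, hgb, IsometryEquiv.apply_eq_of_apply_midpoint_eq hgm hgb,
      ← ι.image_rigidCyl, hι]
  · rw [hΦeq (hC hx), hΦeq (hC hy)]
    exact g.dist_eq x y

/-- **Rigid motion of cylinders along elongated neighbourhoods**: for every `c > 0` there is
`K > 0`, depending only on `c` and `d ≥ 2`, such that for all `p, q ∈ ℝ^d`, `r > 0` with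
`|p - q| / r ≤ c`, and all isometric rigid solid cylinders `C_p ⊆ B(p,r)`, `C_q ⊆ B(q,r)`,
there is a `C¹` diffeomorphism `φ` of `ℝ^d` supported in `E(p,q;10r)` mapping `C_p`
isometrically onto `C_q` with `[φ]_Lip ≤ K`. -/
theorem cylinder_isometry_two_balls (d : ℕ) (hd : 2 ≤ d) (c : ℝ) (hc : 0 < c) :
    ∃ K : ℝ, 0 < K ∧
      ∀ (p q : EuclideanSpace ℝ (Fin d)) (r : ℝ), 0 < r → dist p q ≤ c * r →
      ∀ (a b a' b' : EuclideanSpace ℝ (Fin d)) (ρ ρ' : ℝ),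
        a ≠ b → 0 < ρ → a' ≠ b' → 0 < ρ' →
        rigidCyl a b ρ ⊆ Metric.ball p r → rigidCyl a' b' ρ' ⊆ Metric.ball q r →
        (∃ ι : EuclideanSpace ℝ (Fin d) ≃ᵢ EuclideanSpace ℝ (Fin d),
          ι '' rigidCyl a b ρ = rigidCyl a' b' ρ') →
        ∃ φ ψ : EuclideanSpace ℝ (Fin d) → EuclideanSpace ℝ (Fin d),
          ContDiff ℝ 1 φ ∧ ContDiff ℝ 1 ψ ∧
          Function.LeftInverse ψ φ ∧ Function.RightInverse ψ φ ∧
          closure {x | φ x ≠ x} ⊆ elongNbhd p q (10 * r) ∧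
          φ '' rigidCyl a b ρ = rigidCyl a' b' ρ' ∧
          (∀ x ∈ rigidCyl a b ρ, ∀ y ∈ rigidCyl a b ρ, dist (φ x) (φ y) = dist x y) ∧
          ∀ x y, dist (φ x) (φ y) ≤ K * dist x y :=
  cylinder_isometry_two_balls_general d hd c
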